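/- The complex vector space of homogeneous polynomials of degree 4 in ℂ[x0,x1,x2,x3] invariant under all six matrices (A1,1), (1,A1), (A2,1), (1,A2), (R4A2,R4A2), (S,S) (i.e. invariant under the group (OO)') has dimension 2, and it is spanned by q² = (x0²+x1²+x2²+x3²)² and f0 = x0⁴+x1⁴+x2⁴+x3⁴. -/

import Mathlib

open Matrix MvPolynomial

noncomputable def A1l : Matrix (Fin 4) (Fin 4) ℝ :=
  !![0, -1, 0, 0; 1, 0, 0, 0; 0, 0, 0, -1; 0, 0, 1, 0]

noncomputable def A1r : Matrix (Fin 4) (Fin 4) ℝ :=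
  !![0, 1, 0, 0; -1, 0, 0, 0; 0, 0, 0, -1; 0, 0, 1, 0]

noncomputable def A2l : Matrix (Fin 4) (Fin 4) ℝ :=
  !![0, 0, -1, 0; 0, 0, 0, 1; 1, 0, 0, 0; 0, -1, 0, 0]

noncomputable def A2r : Matrix (Fin 4) (Fin 4) ℝ :=
  !![0, 0, 1, 0; 0, 0, 0, 1; -1, 0, 0, 0; 0, -1, 0, 0]

noncomputable def Sl : Matrix (Fin 4) (Fin 4) ℝ :=
  (1 / 2 : ℝ) • !![1, -1, 1, -1; 1, 1, -1, -1; -1, 1, 1, -1; 1, 1, 1, 1]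

noncomputable def Sr : Matrix (Fin 4) (Fin 4) ℝ :=
  (1 / 2 : ℝ) • !![1, 1, -1, 1; -1, 1, -1, -1; 1, 1, 1, -1; -1, 1, 1, 1]

noncomputable def SS : Matrix (Fin 4) (Fin 4) ℝ := Sl * Sr

noncomputable def R4A2 : Matrix (Fin 4) (Fin 4) ℝ :=
  !![1, 0, 0, 0; 0, -1, 0, 0; 0, 0, 0, 1; 0, 0, 1, 0]

/-- The substitution action of a real 4×4 matrix on `ℂ[x₀,x₁,x₂,x₃]`: `f(x) ↦ f(M·x)`. -/
noncomputable def subst (M : Matrix (Fin 4) (Fin 4) ℝ) :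
    MvPolynomial (Fin 4) ℂ →ₐ[ℂ] MvPolynomial (Fin 4) ℂ :=
  MvPolynomial.aeval (fun i => ∑ j, MvPolynomial.C ((M i j : ℝ) : ℂ) * MvPolynomial.X j)

/-- Degree-4 homogeneous polynomials invariant under the group (OO)'. -/
noncomputable def OOprimeInv4 : Submodule ℂ (MvPolynomial (Fin 4) ℂ) :=
  homogeneousSubmodule (Fin 4) ℂ 4 ⊓
    ⨅ M ∈ ({A1l, A1r, A2l, A2r, R4A2, SS} : Set (Matrix (Fin 4) (Fin 4) ℝ)),
      LinearMap.eqLocus (subst M).toLinearMap LinearMap.id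

noncomputable def q : MvPolynomial (Fin 4) ℂ := X 0 ^ 2 + X 1 ^ 2 + X 2 ^ 2 + X 3 ^ 2
noncomputable def f0 : MvPolynomial (Fin 4) ℂ := X 0 ^ 4 + X 1 ^ 4 + X 2 ^ 4 + X 3 ^ 4

/-!
Every generator of (OO)' is a signed permutation matrix, so it sends each monomial to ± a
monomial and invariance becomes a system of relations `coeff d = ± coeff (d ∘ σ)`. The products
(A1,1)(1,A1) and (A2,1)(1,A2) are diagonal sign changes; they kill every quartic monomial except
`xᵢ⁴`, `xᵢ²xⱼ²` and `x₀x₁x₂x₃`, the reflection (R4A2,R4A2) kills `x₀x₁x₂x₃`, and the permutations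
act transitively on the other two families. Hence an invariant quartic is determined by its
coefficients of `x₀⁴` and `x₀²x₁²`, so the space has dimension at most 2. Conversely `q = p₂` and
`f0 = p₄` are power sums of even degree, invariant under all signed permutations, and `q²`, `f0`
are independent (compare their values at (1,0,0,0) and (1,1,0,0)).
-/

open Equiv

namespace MvPolynomial

variable {ι R : Type*} [CommSemiring R]

noncomputable def monomialSubst (σ : Perm ι) (c : ι → R) :
    MvPolynomial ι R →ₐ[R] MvPolynomial ι R :=
  aeval fun i => C (c i) * X (σ i)

theorem monomialSubst_eq_rename_comp (σ : Perm ι) (c : ι → R) :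
    monomialSubst σ c = (rename σ).comp (monomialSubst 1 c) :=
  algHom_ext fun i => by simp [monomialSubst]

variable [Fintype ι]

theorem coeff_monomialSubst_one (c : ι → R) (f : MvPolynomial ι R) (d : ι →₀ ℕ) :
    coeff d (monomialSubst 1 c f) = (∏ i, c i ^ d i) * coeff d f := by
  induction f using induction_on' with
  | add p q hp hq => simp only [map_add, coeff_add, mul_add, hp, hq]
  | monomial u a =>
    classical
    have : monomialSubst 1 c (monomial u a) = C (∏ i, c i ^ u i) * monomial u a := by
      rw [monomialSubst, aeval_monomial, monomial_eq, Finsupp.prod_fintype _ _ fun _ => pow_zero _,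
        Finsupp.prod_fintype _ _ fun _ => pow_zero _]
      simp only [Perm.coe_one, id_eq, mul_pow, Finset.prod_mul_distrib, ← C_pow, ← map_prod,
        algebraMap_eq]
      ring
    rw [this, coeff_C_mul, coeff_monomial]
    split_ifs with h
    · rw [h]
    · simp

theorem coeff_monomialSubst (σ : Perm ι) (c : ι → R) (f : MvPolynomial ι R)
    (d : ι →₀ ℕ) :
    coeff d (monomialSubst σ c f) =
      (∏ i, c i ^ d (σ i)) * coeff (d.equivMapDomain σ.symm) f := by
  have hd : d = (d.equivMapDomain σ.symm).mapDomain σ := by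
    rw [← Finsupp.equivMapDomain_eq_mapDomain]; ext i; simp
  rw [monomialSubst_eq_rename_comp, AlgHom.comp_apply, hd, coeff_rename_mapDomain _ σ.injective,
    coeff_monomialSubst_one, ← hd]
  simp

theorem monomialSubst_psum (σ : Perm ι) {c : ι → R} {n : ℕ} (hc : ∀ i, c i ^ n = 1) :
    monomialSubst σ c (psum ι R n) = psum ι R n := by
  simp only [psum, map_sum, map_pow, monomialSubst, aeval_X, mul_pow, ← C_pow, hc, C_1, one_mul]
  exact Equiv.sum_comp σ fun i => X i ^ n

end MvPolynomial

def IsSignedPermMatrix {ι R : Type*} [DecidableEq ι] [Ring R] (M : Matrix ι ι R)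
    (σ : Perm ι) (s : ι → ℤˣ) : Prop :=
  ∀ i j, M i j = if σ i = j then ((s i : ℤ) : R) else 0

theorem subst_mul (M N : Matrix (Fin 4) (Fin 4) ℝ) :
    subst (M * N) = (subst N).comp (subst M) := by
  refine algHom_ext fun i => ?_
  simp only [subst, AlgHom.comp_apply, aeval_X, map_sum, map_mul, algHom_C, algebraMap_eq,
    Matrix.mul_apply, Complex.ofReal_sum, Complex.ofReal_mul, Finset.sum_mul,
    Finset.mul_sum, mul_assoc]
  exact Finset.sum_comm

theorem subst_eq_monomialSubst {M : Matrix (Fin 4) (Fin 4) ℝ} {σ : Perm (Fin 4)}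
    {s : Fin 4 → ℤˣ} (hM : IsSignedPermMatrix M σ s) :
    subst M = monomialSubst σ fun i => ((s i : ℤ) : ℂ) :=
  algHom_ext fun i => by
    simp [subst, monomialSubst, hM i, apply_ite]

theorem isSignedPermMatrix_A1l :
    IsSignedPermMatrix A1l (swap 0 1 * swap 2 3) ![-1, 1, -1, 1] := by
  intro i j; fin_cases i <;> fin_cases j <;> simp [A1l, swap_apply_def]

theorem isSignedPermMatrix_A1r :
    IsSignedPermMatrix A1r (swap 0 1 * swap 2 3) ![1, -1, -1, 1] := by
  intro i j; fin_cases i <;> fin_cases j <;> simp [A1r, swap_apply_def]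

theorem isSignedPermMatrix_A2l :
    IsSignedPermMatrix A2l (swap 0 2 * swap 1 3) ![-1, 1, 1, -1] := by
  intro i j; fin_cases i <;> fin_cases j <;> simp [A2l, swap_apply_def]

theorem isSignedPermMatrix_A2r :
    IsSignedPermMatrix A2r (swap 0 2 * swap 1 3) ![1, 1, -1, -1] := by
  intro i j; fin_cases i <;> fin_cases j <;> simp [A2r, swap_apply_def]

theorem isSignedPermMatrix_R4A2 :
    IsSignedPermMatrix R4A2 (swap 2 3) ![1, -1, 1, 1] := by
  intro i j; fin_cases i <;> fin_cases j <;> simp [R4A2, swap_apply_def]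

theorem isSignedPermMatrix_SS :
    IsSignedPermMatrix SS (swap 1 2 * swap 2 3) ![1, -1, -1, 1] := by
  intro i j; fin_cases i <;> fin_cases j <;>
    norm_num +decide [SS, Sl, Sr, Matrix.mul_apply, Fin.sum_univ_four, Matrix.cons_val_two,
      Matrix.cons_val_three]

theorem isSignedPermMatrix_A1l_mul_A1r :
    IsSignedPermMatrix (A1l * A1r) 1 ![1, 1, -1, -1] := by
  intro i j; fin_cases i <;> fin_cases j <;>
    simp [A1l, A1r, Matrix.mul_apply, Fin.sum_univ_four]

theorem isSignedPermMatrix_A2l_mul_A2r :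
    IsSignedPermMatrix (A2l * A2r) 1 ![1, -1, 1, -1] := by
  intro i j; fin_cases i <;> fin_cases j <;>
    simp [A2l, A2r, Matrix.mul_apply, Fin.sum_univ_four]

theorem coeff_of_subst_eq {M : Matrix (Fin 4) (Fin 4) ℝ} {σ : Perm (Fin 4)}
    {s : Fin 4 → ℤˣ} (hM : IsSignedPermMatrix M σ s) {f : MvPolynomial (Fin 4) ℂ}
    (hf : subst M f = f) (v : Fin 4 → ℕ) :
    coeff (Finsupp.equivFunOnFinite.symm v) f = (∏ i, ((s i : ℤ) : ℂ) ^ v (σ i)) *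
      coeff (Finsupp.equivFunOnFinite.symm ![v (σ 0), v (σ 1), v (σ 2), v (σ 3)]) f := by
  conv_lhs => rw [← hf, subst_eq_monomialSubst hM, coeff_monomialSubst]
  congr 2
  ext i; fin_cases i <;> rfl

theorem subst_psum {M : Matrix (Fin 4) (Fin 4) ℝ} {σ : Perm (Fin 4)} {s : Fin 4 → ℤˣ}
    (hM : IsSignedPermMatrix M σ s) {n : ℕ} (hn : Even n) :
    subst M (psum (Fin 4) ℂ n) = psum (Fin 4) ℂ n := by
  rw [subst_eq_monomialSubst hM]
  refine monomialSubst_psum σ fun i => ?_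
  rcases Int.units_eq_one_or (s i) with h | h <;> simp [h, hn.neg_one_pow]

theorem q_eq_psum : q = psum (Fin 4) ℂ 2 := by
  simp [q, psum, Fin.sum_univ_four]

theorem f0_eq_psum : f0 = psum (Fin 4) ℂ 4 := by
  simp [f0, psum, Fin.sum_univ_four]

theorem mem_OOprimeInv4_iff {f : MvPolynomial (Fin 4) ℂ} :
    f ∈ OOprimeInv4 ↔ f.IsHomogeneous 4 ∧
      ∀ M ∈ ({A1l, A1r, A2l, A2r, R4A2, SS} : Set (Matrix (Fin 4) (Fin 4) ℝ)), subst M f = f := by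
  simp [OOprimeInv4, Submodule.mem_iInf, mem_homogeneousSubmodule]

theorem psum_mem_OOprimeInv4 {n : ℕ} (hn : Even n) (k : ℕ) (hnk : n * k = 4) :
    psum (Fin 4) ℂ n ^ k ∈ OOprimeInv4 := by
  refine mem_OOprimeInv4_iff.2 ⟨?_, fun M hM => ?_⟩
  · rw [← hnk]
    exact (IsHomogeneous.sum _ _ _ fun i _ => isHomogeneous_X_pow i n).pow k
  · obtain ⟨σ, s, hσs⟩ : ∃ σ s, IsSignedPermMatrix M σ s := by
      simp only [Set.mem_insert_iff, Set.mem_singleton_iff] at hM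
      rcases hM with rfl | rfl | rfl | rfl | rfl | rfl
      exacts [⟨_, _, isSignedPermMatrix_A1l⟩, ⟨_, _, isSignedPermMatrix_A1r⟩,
        ⟨_, _, isSignedPermMatrix_A2l⟩, ⟨_, _, isSignedPermMatrix_A2r⟩,
        ⟨_, _, isSignedPermMatrix_R4A2⟩, ⟨_, _, isSignedPermMatrix_SS⟩]
    rw [map_pow, subst_psum hσs hn]

theorem quartic_coeff_eq_zero (K : ℕ → ℕ → ℕ → ℕ → ℂ)
    (hA : ∀ a b c e, K a b c e = (-1) ^ b * (-1) ^ e * K b a e c)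
    (hR : ∀ a b c e, K a b c e = (-1) ^ b * K a b e c)
    (hS : ∀ a b c e, K a b c e = (-1) ^ c * (-1) ^ e * K a c e b)
    (hD1 : ∀ a b c e, K a b c e = (-1) ^ c * (-1) ^ e * K a b c e)
    (hD2 : ∀ a b c e, K a b c e = (-1) ^ b * (-1) ^ e * K a b c e)
    (h4 : K 4 0 0 0 = 0) (h22 : K 2 2 0 0 = 0)
    (a b c e : ℕ) (hsum : a + b + c + e = 4) : K a b c e = 0 := by
  by_cases hbe : (b + e) % 2 = 1
  · have h := hD2 a b c e
    rw [← pow_add, (Nat.odd_iff.2 hbe).neg_one_pow] at h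
    linear_combination h / 2
  by_cases hce : (c + e) % 2 = 1
  · have h := hD1 a b c e
    rw [← pow_add, (Nat.odd_iff.2 hce).neg_one_pow] at h
    linear_combination h / 2
  have h0400 : K 0 4 0 0 = 0 := by rw [hA]; norm_num [h4]
  have h0040 : K 0 0 4 0 = 0 := by rw [hS]; norm_num [h0400]
  have h0004 : K 0 0 0 4 = 0 := by rw [hS]; norm_num [h0040]
  have h2020 : K 2 0 2 0 = 0 := by rw [hS]; norm_num [h22]
  have h2002 : K 2 0 0 2 = 0 := by rw [hS]; norm_num [h2020]
  have h0220 : K 0 2 2 0 = 0 := by rw [hA]; norm_num [h2002]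
  have h0202 : K 0 2 0 2 = 0 := by rw [hA]; norm_num [h2020]
  have h0022 : K 0 0 2 2 = 0 := by rw [hS]; norm_num [h0220]
  have h1111 : K 1 1 1 1 = 0 := by
    have h := hR 1 1 1 1
    norm_num at h
    linear_combination h / 2
  have ha : a ≤ 4 := by omega
  have hb : b ≤ 4 := by omega
  have hc : c ≤ 4 := by omega
  obtain rfl : e = 4 - a - b - c := by omega
  interval_cases a <;> interval_cases b <;> interval_cases c <;> first | assumption | omega

theorem eq_zero_of_mem_OOprimeInv4 {f : MvPolynomial (Fin 4) ℂ} (hf : f ∈ OOprimeInv4)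
    (h4 : coeff (Finsupp.equivFunOnFinite.symm ![4, 0, 0, 0]) f = 0)
    (h22 : coeff (Finsupp.equivFunOnFinite.symm ![2, 2, 0, 0]) f = 0) : f = 0 := by
  obtain ⟨hhom, hinv⟩ := mem_OOprimeInv4_iff.1 hf
  have hD1 : subst (A1l * A1r) f = f := by
    rw [subst_mul, AlgHom.comp_apply, hinv A1l (by simp), hinv A1r (by simp)]
  have hD2 : subst (A2l * A2r) f = f := by
    rw [subst_mul, AlgHom.comp_apply, hinv A2l (by simp), hinv A2r (by simp)]
  have hK := quartic_coeff_eq_zero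
    (fun a b c e => coeff (Finsupp.equivFunOnFinite.symm ![a, b, c, e]) f)
    (fun a b c e => by simpa +decide [Fin.prod_univ_four, swap_apply_def] using
      coeff_of_subst_eq isSignedPermMatrix_A1l (hinv A1l (by simp)) ![a, b, c, e])
    (fun a b c e => by simpa +decide [Fin.prod_univ_four, swap_apply_def] using
      coeff_of_subst_eq isSignedPermMatrix_R4A2 (hinv R4A2 (by simp)) ![a, b, c, e])
    (fun a b c e => by simpa +decide [Fin.prod_univ_four, swap_apply_def] using
      coeff_of_subst_eq isSignedPermMatrix_SS (hinv SS (by simp)) ![a, b, c, e])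
    (fun a b c e => by simpa +decide [Fin.prod_univ_four] using
      coeff_of_subst_eq isSignedPermMatrix_A1l_mul_A1r hD1 ![a, b, c, e])
    (fun a b c e => by simpa +decide [Fin.prod_univ_four] using
      coeff_of_subst_eq isSignedPermMatrix_A2l_mul_A2r hD2 ![a, b, c, e]) h4 h22
  ext d
  rw [coeff_zero]
  by_contra hd
  have hdeg := hhom hd
  simp only [Finsupp.weight_apply, Pi.one_apply, smul_eq_mul, mul_one, implies_true,
    Finsupp.sum_fintype, Fin.sum_univ_four] at hdeg
  have hd_eq : Finsupp.equivFunOnFinite.symm ![d 0, d 1, d 2, d 3] = d := by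
    ext i; fin_cases i <;> rfl
  exact hd (hd_eq ▸ hK (d 0) (d 1) (d 2) (d 3) hdeg)

noncomputable def OOprimeInv4.coeffPair : OOprimeInv4 →ₗ[ℂ] ℂ × ℂ :=
  ((lcoeff ℂ (Finsupp.equivFunOnFinite.symm ![4, 0, 0, 0])).prod
    (lcoeff ℂ (Finsupp.equivFunOnFinite.symm ![2, 2, 0, 0]))).comp OOprimeInv4.subtype

theorem OOprimeInv4.coeffPair_injective : Function.Injective OOprimeInv4.coeffPair := by
  refine (injective_iff_map_eq_zero _).2 fun f hf => ?_
  simp only [coeffPair, LinearMap.coe_comp, Submodule.coe_subtype, Function.comp_apply,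
    LinearMap.prod_apply, Function.prod_apply, lcoeff_apply, Prod.ext_iff, Prod.fst_zero,
    Prod.snd_zero] at hf
  exact Subtype.ext (eq_zero_of_mem_OOprimeInv4 f.2 hf.1 hf.2)

theorem linearIndependent_q_sq_f0 : LinearIndependent ℂ ![q ^ 2, f0] := by
  refine LinearIndependent.pair_iff.2 fun s t hst => ?_
  have h1 := congrArg (eval ![1, 0, 0, 0]) hst
  have h2 := congrArg (eval ![1, 1, 0, 0]) hst
  simp only [q, f0, smul_add, map_add, smul_eval, map_pow, eval_X, cons_val_zero, cons_val_one,
    cons_val, one_pow, ne_eq, OfNat.ofNat_ne_zero, not_false_eq_true, zero_pow, add_zero,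
    mul_one, mul_zero, map_zero] at h1 h2
  constructor
  · linear_combination (h2 - 2 * h1) / 2
  · linear_combination (4 * h1 - h2) / 2

theorem finrank_span_q_sq_f0 : Module.finrank ℂ (Submodule.span ℂ {q ^ 2, f0}) = 2 := by
  rw [← Matrix.range_cons_cons_empty _ _ ![], finrank_span_eq_card linearIndependent_q_sq_f0,
    Fintype.card_fin]

theorem span_q_sq_f0_le : Submodule.span ℂ {q ^ 2, f0} ≤ OOprimeInv4 := by
  rw [Submodule.span_le, Set.insert_subset_iff, Set.singleton_subset_iff, q_eq_psum, f0_eq_psum]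
  exact ⟨psum_mem_OOprimeInv4 even_two 2 rfl,
    by simpa using psum_mem_OOprimeInv4 (by decide) 1 rfl⟩

theorem stmt7 :
    Module.finrank ℂ OOprimeInv4 = 2 ∧
    OOprimeInv4 = Submodule.span ℂ {q ^ 2, f0} := by
  have : FiniteDimensional ℂ OOprimeInv4 :=
    .of_injective _ OOprimeInv4.coeffPair_injective
  have hdim : Module.finrank ℂ OOprimeInv4 ≤ 2 := by
    simpa using LinearMap.finrank_le_finrank_of_injective OOprimeInv4.coeffPair_injective
  have heq := Submodule.eq_of_le_of_finrank_le span_q_sq_f0_le (hdim.trans finrank_span_q_sq_f0.ge)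
  exact ⟨heq ▸ finrank_span_q_sq_f0, heq.symm⟩
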